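/- Let H_0, ..., H_{K-1} be d×d matrices, α ∈ R, g ∈ R^d, 1 ≤ L < K, and set P_j = ∏_{k=K-j}^{K-1}(I - α H_k) with P_0 = I. Then ∏_{k=0}^{K-1}(I - α H_k) g − [I + Σ_{l=1}^{L} Σ_{0≤k_1<...<k_l<K} ∏_{i=1}^{l}(-α H_{k_i})] g = Σ_{l=1}^{K-L} [Σ_{0≤k_1<...<k_L≤K-1-l} ∏_{i=1}^{L}(-α H_{k_i})] (-α H_{K-l}) P_{l-1} g. -/

import Mathlib

/-! Write `A k = -α H k` and let `e_j(m)` be the sum of the ordered products `A_{k₁} ⋯ A_{k_j}`,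
`k₁ < ⋯ < k_j < m`, so that the truncated expansion is `B_L(m) = Σ_{j ≤ L} e_j(m)` and the full
product is `∏_{k<m} (1 + A_k)`. Since `e_{j+1}(m+1) = e_{j+1}(m) + e_j(m) A_m`, multiplying on the
right by `1 + A_m` gives `B_L(m) (1 + A_m) = B_L(m+1) + e_L(m) A_m`: the only terms lost are those
of degree `L + 1` ending in `A_m`. Appending the factors of the product one at a time, each factor
`m` contributes the residual `e_L(m) A_m ∏_{m<k<K} (1 + A_k)`; it vanishes for `m < L`, and
`l = K - m` is the paper's indexing. -/

open Matrix Finset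

variable {d : ℕ}

/-- Operator (spectral) norm of a real `d × d` matrix, acting on Euclidean space. -/
noncomputable def matOpNorm (M : Matrix (Fin d) (Fin d) ℝ) : ℝ :=
  ‖Matrix.toEuclideanCLM (𝕜 := ℝ) M‖

/-- Apply a matrix to a vector of Euclidean space. -/
noncomputable def applyM (M : Matrix (Fin d) (Fin d) ℝ) (g : EuclideanSpace ℝ (Fin d)) :
    EuclideanSpace ℝ (Fin d) :=
  Matrix.toEuclideanCLM (𝕜 := ℝ) M g

/-- Ordered product `∏_{k=a}^{a+n-1} (I - α H k)`, factors ordered by increasing `k`. -/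
def mulList (H : ℕ → Matrix (Fin d) (Fin d) ℝ) (α : ℝ) (a n : ℕ) :
    Matrix (Fin d) (Fin d) ℝ :=
  ((List.range' a n).map (fun k => (1 : Matrix (Fin d) (Fin d) ℝ) - α • H k)).prod

/-- Truncated binomial expansion
`I + Σ_{l=1}^{L} Σ_{0 ≤ k₁ < … < k_l < K} ∏_{i=1}^{l} (-α H_{k_i})`,
with each inner product ordered by increasing index. -/
def binomSum (H : ℕ → Matrix (Fin d) (Fin d) ℝ) (α : ℝ) (K L : ℕ) :
    Matrix (Fin d) (Fin d) ℝ :=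
  1 + ∑ l ∈ Finset.Icc 1 L, ∑ s ∈ (Finset.range K).powersetCard l,
      ((s.sort (· ≤ ·)).map (fun k => -(α • H k))).prod

theorem Finset.sort_insert_of_forall_lt {α : Type*} [LinearOrder α] {s : Finset α} {m : α}
    (h : ∀ b ∈ s, b < m) : (insert m s).sort (· ≤ ·) = s.sort (· ≤ ·) ++ [m] := by
  have hm : m ∉ s := fun hm => lt_irrefl m (h m hm)
  refine List.Perm.eq_of_pairwise' (pairwise_sort _ _) ?_ ?_
  · exact List.pairwise_append.2 ⟨pairwise_sort _ _, List.pairwise_singleton _ _,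
      fun a ha b hb => by
        rw [List.mem_singleton.1 hb]
        exact (h a ((mem_sort _).1 ha)).le⟩
  · exact (sort_perm_toList _ _).trans <| (toList_insert hm).trans <|
      ((sort_perm_toList s _).symm.cons m).trans (List.perm_append_singleton m _).symm

theorem Finset.sum_range_eq_sum_Icc_sub {M : Type*} [AddCommMonoid M] {f : ℕ → M} {L : ℕ}
    (hf : ∀ m < L, f m = 0) (K : ℕ) :
    ∑ m ∈ range K, f m = ∑ l ∈ Icc 1 (K - L), f (K - l) := by
  calc ∑ m ∈ range K, f m = ∑ m ∈ Ico L K, f m := by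
        refine (sum_subset (fun m hm => ?_) fun m hK hL => hf m ?_).symm
        · simp only [mem_Ico, mem_range] at hm ⊢; omega
        · simp only [mem_Ico, mem_range] at hK hL; omega
    _ = ∑ l ∈ Icc 1 (K - L), f (K - l) := by
        refine sum_nbij' (K - ·) (K - ·) (fun m hm => ?_) (fun l hl => ?_) (fun m hm => ?_)
          (fun l hl => ?_) fun m hm => congrArg f ?_ <;>
          simp only [mem_Ico, mem_Icc] at * <;> omega

section OrderedBinomial

variable {R : Type*} [Ring R] (A : ℕ → R)

def orderedEsymm (l m : ℕ) : R :=
  ∑ s ∈ (range m).powersetCard l, ((s.sort (· ≤ ·)).map A).prod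

def truncBinom (L m : ℕ) : R :=
  ∑ l ∈ range (L + 1), orderedEsymm A l m

def prodOneAdd (a n : ℕ) : R :=
  ((List.range' a n).map (1 + A ·)).prod

@[simp]
theorem orderedEsymm_zero_left (m : ℕ) : orderedEsymm A 0 m = 1 := by
  simp [orderedEsymm]

theorem orderedEsymm_eq_zero_of_lt {l m : ℕ} (h : m < l) : orderedEsymm A l m = 0 := by
  rw [orderedEsymm, powersetCard_eq_empty.2 (by simpa using h), sum_empty]

theorem orderedEsymm_succ_succ (j m : ℕ) :
    orderedEsymm A (j + 1) (m + 1) = orderedEsymm A (j + 1) m + orderedEsymm A j m * A m := by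
  have hm : m ∉ range m := by simp
  have hdisj : Disjoint ((range m).powersetCard (j + 1))
      (((range m).powersetCard j).image (insert m)) := by
    refine disjoint_left.2 fun t ht ht' => ?_
    obtain ⟨u, -, rfl⟩ := mem_image.1 ht'
    exact hm ((mem_powersetCard.1 ht).1 (mem_insert_self m u))
  have hinj : Set.InjOn (insert m) ((range m).powersetCard j : Set (Finset ℕ)) :=
    fun s hs t ht hst => by
      rw [← erase_insert (fun h => hm ((mem_powersetCard.1 hs).1 h)),
        ← erase_insert (fun h => hm ((mem_powersetCard.1 ht).1 h)), hst]
  rw [orderedEsymm, range_add_one, powersetCard_succ_insert hm, sum_union hdisj,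
    sum_image hinj, orderedEsymm, orderedEsymm, sum_mul]
  congr 1
  refine sum_congr rfl fun s hs => ?_
  rw [sort_insert_of_forall_lt fun b hb => mem_range.1 ((mem_powersetCard.1 hs).1 hb)]
  simp

theorem truncBinom_zero_right (L : ℕ) : truncBinom A L 0 = 1 := by
  rw [truncBinom, sum_range_succ', sum_eq_zero fun j _ => orderedEsymm_eq_zero_of_lt A j.succ_pos,
    zero_add, orderedEsymm_zero_left]

theorem truncBinom_mul_one_add (L m : ℕ) :
    truncBinom A L m * (1 + A m) = truncBinom A L (m + 1) + orderedEsymm A L m * A m := by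
  have hsucc : truncBinom A L (m + 1)
      = truncBinom A L m + ∑ j ∈ range L, orderedEsymm A j m * A m := by
    rw [truncBinom, truncBinom, sum_range_succ', sum_range_succ' _ L]
    simp only [orderedEsymm_succ_succ, sum_add_distrib, orderedEsymm_zero_left]
    abel
  rw [hsucc, mul_one_add, truncBinom, sum_mul,
    sum_range_succ (fun j => orderedEsymm A j m * A m)]
  abel

theorem prodOneAdd_zero_right (a : ℕ) : prodOneAdd A a 0 = 1 := rfl

theorem prodOneAdd_succ_right (a n : ℕ) :
    prodOneAdd A a (n + 1) = prodOneAdd A a n * (1 + A (a + n)) := by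
  simp [prodOneAdd, List.range'_concat]

theorem prodOneAdd_sub_truncBinom (L K : ℕ) :
    prodOneAdd A 0 K - truncBinom A L K
      = ∑ m ∈ range K, orderedEsymm A L m * A m * prodOneAdd A (m + 1) (K - (m + 1)) := by
  induction K with
  | zero => simp [prodOneAdd_zero_right, truncBinom_zero_right]
  | succ K ih =>
    have hshift : ∀ m ∈ range K, prodOneAdd A (m + 1) (K - (m + 1)) * (1 + A K)
        = prodOneAdd A (m + 1) (K + 1 - (m + 1)) := fun m hm => by
      obtain ⟨n, rfl⟩ := Nat.exists_eq_add_of_lt (mem_range.1 hm)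
      rw [show m + n + 1 + 1 - (m + 1) = n + 1 by omega, prodOneAdd_succ_right]
      congr 3 <;> omega
    calc prodOneAdd A 0 (K + 1) - truncBinom A L (K + 1)
        = (prodOneAdd A 0 K - truncBinom A L K) * (1 + A K) + orderedEsymm A L K * A K := by
          rw [prodOneAdd_succ_right, zero_add, sub_mul, truncBinom_mul_one_add]
          abel
      _ = _ := by
          rw [ih, sum_mul, sum_range_succ, Nat.sub_self, prodOneAdd_zero_right, mul_one]
          congr 1
          exact sum_congr rfl fun m hm => by rw [mul_assoc, hshift m hm]

theorem prodOneAdd_sub_truncBinom_eq_sum_Icc (L K : ℕ) :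
    prodOneAdd A 0 K - truncBinom A L K
      = ∑ l ∈ Icc 1 (K - L),
          orderedEsymm A L (K - l) * A (K - l) * prodOneAdd A (K - l + 1) (l - 1) := by
  rw [prodOneAdd_sub_truncBinom, sum_range_eq_sum_Icc_sub fun m hm => by
    rw [orderedEsymm_eq_zero_of_lt A hm, zero_mul, zero_mul]]
  refine sum_congr rfl fun l hl => ?_
  rw [mem_Icc] at hl
  congr 2
  omega

end OrderedBinomial

theorem mulList_eq_prodOneAdd (H : ℕ → Matrix (Fin d) (Fin d) ℝ) (α : ℝ) (a n : ℕ) :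
    mulList H α a n = prodOneAdd (fun k => -(α • H k)) a n := by
  simp only [mulList, prodOneAdd, sub_eq_add_neg]

theorem binomSum_eq_truncBinom (H : ℕ → Matrix (Fin d) (Fin d) ℝ) (α : ℝ) (K L : ℕ) :
    binomSum H α K L = truncBinom (fun k => -(α • H k)) L K := by
  rw [binomSum, truncBinom, sum_range_succ', orderedEsymm_zero_left, add_comm,
    ← Ico_add_one_right_eq_Icc, sum_Ico_eq_sum_range, Nat.add_sub_cancel]
  simp only [add_comm 1]
  rfl

theorem binommaml_residual_decomposition_general (K L : ℕ) (Hm : ℕ → Matrix (Fin d) (Fin d) ℝ)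
    (α : ℝ) (g : EuclideanSpace ℝ (Fin d)) :
    applyM (mulList Hm α 0 K) g - applyM (binomSum Hm α K L) g
      = ∑ l ∈ Finset.Icc 1 (K - L),
          applyM
            ((∑ s ∈ (Finset.range (K - l)).powersetCard L,
                ((s.sort (· ≤ ·)).map (fun k => -(α • Hm k))).prod)
              * (-(α • Hm (K - l))) * mulList Hm α (K - l + 1) (l - 1)) g := by
  simp only [applyM, ← _root_.sub_apply, ← map_sub, ← _root_.sum_apply, ← map_sum]
  rw [mulList_eq_prodOneAdd, binomSum_eq_truncBinom, prodOneAdd_sub_truncBinom_eq_sum_Icc]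
  simp only [mulList_eq_prodOneAdd]
  rfl

/-- Exact residual decomposition of the BinomMAML meta-gradient difference:
`∏_{k=0}^{K-1}(I - α H_k) g − Ĝ
  = Σ_{l=1}^{K-L} [Σ_{0≤k₁<…<k_L≤K-1-l} ∏_{i=1}^{L}(-α H_{k_i})] (-α H_{K-l}) P_{l-1} g`. -/
theorem binommaml_residual_decomposition (K L : ℕ) (Hm : ℕ → Matrix (Fin d) (Fin d) ℝ)
    (α : ℝ) (hL1 : 1 ≤ L) (hLK : L < K) (g : EuclideanSpace ℝ (Fin d)) :
    applyM (mulList Hm α 0 K) g - applyM (binomSum Hm α K L) g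
      = ∑ l ∈ Finset.Icc 1 (K - L),
          applyM
            ((∑ s ∈ (Finset.range (K - l)).powersetCard L,
                ((s.sort (· ≤ ·)).map (fun k => -(α • Hm k))).prod)
              * (-(α • Hm (K - l))) * mulList Hm α (K - l + 1) (l - 1)) g :=
  binommaml_residual_decomposition_general K L Hm α g
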